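/- arXiv:math/0604525 — 3 statements merged into one kernel-verified Lean document; each statement's English description precedes it below -/
import Mathlib

section
/- Let P = P(t,x) ∈ ℚ[[t,x]] be the unique formal power series with zero constant term satisfying P = x·(E−1)/(1−t·(E−1)), where E = exp(x+t·P). Let Hᵃ = E−1−(x+t·P), let Hᵖ be the unique power series with t·Hᵖ = −x·log(1−t·(E−1)), and let H = Hᵖ + Hᵃ − P. Set A = ∂ₓH and z = x + t·P. Then z = x·exp(t·A) and x = z − t·z·(exp(z)−1); moreover (A,z) is the unique pair of formal power series in ℚ[[t,x]] with A having zero constant term and z ≡ x modulo terms of total degree ≥ 2 which satisfies these two equations. -/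
/-!
Put `u = t(exp z − 1)`. Clearing the denominator in the equation for `P` gives `x = z(1 − u)`,
which is the second identity. Differentiating the definitions of `Hᵖ`, `Hᵃ` and `z` in `x`, with
`∂ exp w = exp w · ∂w` and `(1 − u) · ∂ log(1 − u) = −∂u`, yields `t·A = −log(1 − u)`, so
`x · exp(tA) = z(1 − u)/(1 − u) = z`.

Both exponential identities used here (`exp(log(1 + w)) = 1 + w`, `exp(u + v) = exp u · exp v`)
hold because the difference `Y` of the two sides solves `∂Y = Y · ∂w` with `Y(0) = 0`, so
`Y · exp(−w)` has vanishing derivatives and constant term. For uniqueness, `exp z₁ − exp z₂` is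
divisible by `z₁ − z₂`, so the difference of two solutions of `x = z − tz(exp z − 1)` times a
unit vanishes; then `exp(tA') = exp(tA)` forces `A' = A`, as `exp` is injective on series without
constant term.
-/

noncomputable section

open MvPowerSeries

/-- Total degree of a monomial exponent. -/
def totalDeg {σ : Type*} (d : σ →₀ ℕ) : ℕ := d.sum fun _ n => n

/-- The sum `Σ_{m≥0} F m` of a family of multivariate power series, each `F m` having
all its nonzero coefficients in total degree at least `m` (so that each coefficient of
the sum is a finite sum). -/
def fsum {σ : Type*} (F : ℕ → MvPowerSeries σ ℚ) : MvPowerSeries σ ℚ :=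
  fun d => ∑ m ∈ Finset.range (totalDeg d + 1), MvPowerSeries.coeff d (F m)

/-- `exp u = Σ_{k≥0} u^k/k!` for a power series `u` with zero constant term. -/
def expS {σ : Type*} (u : MvPowerSeries σ ℚ) : MvPowerSeries σ ℚ :=
  fsum fun k => (k.factorial : ℚ)⁻¹ • u ^ k

/-- `log(1+u) = Σ_{k≥1} (−1)^{k−1} u^k/k` for a power series `u` with zero constant
term. -/
def logS {σ : Type*} (u : MvPowerSeries σ ℚ) : MvPowerSeries σ ℚ :=
  fsum fun k => if k = 0 then 0 else ((-1 : ℚ) ^ (k - 1) / k) • u ^ k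

/-- The partial derivative of a multivariate power series with respect to the
variable `s`. -/
def pderivS {σ : Type*} [DecidableEq σ] (s : σ) (f : MvPowerSeries σ ℚ) :
    MvPowerSeries σ ℚ :=
  fun d => ((d s : ℕ) + 1 : ℚ) * MvPowerSeries.coeff (d + Finsupp.single s 1) f

end

open MvPowerSeries Finset

variable {σ : Type*}

theorem totalDeg_eq_degree (d : σ →₀ ℕ) : totalDeg d = d.degree := rfl

theorem natCast_le_order_smul_pow {u : MvPowerSeries σ ℚ} (hu : constantCoeff u = 0) (c : ℚ)
    (k : ℕ) : (k : ℕ∞) ≤ (c • u ^ k).order :=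
  (le_order_pow_of_constantCoeff_eq_zero k hu).trans le_order_smul

section fsum

variable {F : ℕ → MvPowerSeries σ ℚ}

theorem coeff_fsum (d : σ →₀ ℕ) :
    coeff d (fsum F) = ∑ m ∈ range (d.degree + 1), coeff d (F m) := rfl

theorem constantCoeff_fsum : constantCoeff (fsum F) = constantCoeff (F 0) := by
  rw [← coeff_zero_eq_constantCoeff_apply, coeff_fsum, map_zero, zero_add, sum_range_one,
    coeff_zero_eq_constantCoeff_apply]

theorem coeff_fsum_of_degree_le (hF : ∀ m : ℕ, (m : ℕ∞) ≤ (F m).order) {d : σ →₀ ℕ} {N : ℕ}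
    (hN : d.degree ≤ N) : coeff d (fsum F) = ∑ m ∈ range (N + 1), coeff d (F m) := by
  rw [coeff_fsum]
  refine sum_subset (range_subset_range.mpr (by omega)) fun m _ hm => coeff_of_lt_order ?_
  rw [mem_range, not_lt] at hm
  exact lt_of_lt_of_le (by exact_mod_cast hm) (hF m)

theorem fsum_eq_add_fsum_succ (hF : ∀ m : ℕ, (m : ℕ∞) ≤ (F m).order) :
    fsum F = F 0 + fsum fun m => F (m + 1) := by
  have hF' : ∀ m : ℕ, (m : ℕ∞) ≤ (F (m + 1)).order :=
    fun m => le_trans (by exact_mod_cast m.le_succ) (hF (m + 1))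
  ext d
  rw [map_add, coeff_fsum_of_degree_le hF d.degree.le_succ, coeff_fsum_of_degree_le hF' le_rfl,
    sum_range_succ', add_comm]

theorem fsum_mul (hF : ∀ m : ℕ, (m : ℕ∞) ≤ (F m).order) (g : MvPowerSeries σ ℚ) :
    fsum F * g = fsum fun m => F m * g := by
  classical
  have hFg : ∀ m : ℕ, (m : ℕ∞) ≤ (F m * g).order :=
    fun m => (hF m).trans (le_self_add.trans le_order_mul)
  ext d
  rw [coeff_fsum_of_degree_le hFg le_rfl, coeff_mul]
  calc ∑ p ∈ antidiagonal d, coeff p.1 (fsum F) * coeff p.2 g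
      = ∑ p ∈ antidiagonal d, ∑ m ∈ range (d.degree + 1), coeff p.1 (F m) * coeff p.2 g :=
        sum_congr rfl fun p hp => by
          rw [coeff_fsum_of_degree_le hF
            (Finsupp.degree_mono (HasAntidiagonal.antidiagonal.fst_le hp)), sum_mul]
    _ = ∑ m ∈ range (d.degree + 1), coeff d (F m * g) := by
        rw [sum_comm]
        simp only [coeff_mul]

theorem mul_fsum (hF : ∀ m : ℕ, (m : ℕ∞) ≤ (F m).order) (g : MvPowerSeries σ ℚ) :
    g * fsum F = fsum fun m => g * F m := by
  simp only [mul_comm g, fsum_mul hF]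

theorem pderiv_fsum (s : σ) (F : ℕ → MvPowerSeries σ ℚ) :
    pderiv ℚ s (fsum F) = pderiv ℚ s (F 0) + fsum fun m => pderiv ℚ s (F (m + 1)) := by
  ext d
  rw [map_add, coeff_pderiv, coeff_fsum, coeff_fsum, coeff_pderiv, map_add, Finsupp.degree_single,
    sum_range_succ', add_mul, sum_mul, add_comm]
  simp only [coeff_pderiv]

end fsum

theorem pderivS_eq_pderiv [DecidableEq σ] (s : σ) (f : MvPowerSeries σ ℚ) :
    pderivS s f = pderiv ℚ s f := by
  ext d
  rw [coeff_pderiv]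
  exact mul_comm _ _

section exp

variable {u v : MvPowerSeries σ ℚ}

theorem constantCoeff_expS (u : MvPowerSeries σ ℚ) : constantCoeff (expS u) = 1 := by
  simp [expS, constantCoeff_fsum]

theorem isUnit_expS (u : MvPowerSeries σ ℚ) : IsUnit (expS u) :=
  isUnit_iff_constantCoeff.mpr (by simp [constantCoeff_expS])

theorem pderiv_expS (s : σ) (hu : constantCoeff u = 0) :
    pderiv ℚ s (expS u) = expS u * pderiv ℚ s u := by
  have hterm : ∀ m : ℕ, pderiv ℚ s (((m + 1).factorial : ℚ)⁻¹ • u ^ (m + 1)) =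
      ((m.factorial : ℚ)⁻¹ • u ^ m) * pderiv ℚ s u := by
    intro m
    rw [Derivation.map_smul, pderiv_pow, Nat.add_sub_cancel, mul_assoc, smul_mul_assoc,
      ← nsmul_eq_mul, ← Nat.cast_smul_eq_nsmul ℚ, smul_smul, Nat.factorial_succ]
    congr 1
    push_cast
    field_simp
  rw [expS, pderiv_fsum, fsum_mul fun m => natCast_le_order_smul_pow hu _ m]
  simp only [hterm, pow_zero, Derivation.map_smul, Derivation.map_one_eq_zero, smul_zero,
    zero_add]

theorem expS_neg_mul_expS (hu : constantCoeff u = 0) : expS (-u) * expS u = 1 := by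
  refine pderiv.ext (fun s => ?_) (by simp [constantCoeff_expS])
  rw [Derivation.leibniz, pderiv_expS s hu, pderiv_expS s (by simp [hu]), map_neg,
    Derivation.map_one_eq_zero, smul_eq_mul, smul_eq_mul]
  ring

theorem eq_zero_of_pderiv_eq_mul_pderiv {Y w : MvPowerSeries σ ℚ} (hw : constantCoeff w = 0)
    (hY : constantCoeff Y = 0) (hD : ∀ s, pderiv ℚ s Y = Y * pderiv ℚ s w) : Y = 0 := by
  have h : Y * expS (-w) = 0 := by
    refine pderiv.ext (fun s => ?_) (by simp [hY])
    rw [Derivation.leibniz, pderiv_expS s (by simp [hw]), hD, map_neg, map_zero, smul_eq_mul,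
      smul_eq_mul]
    ring
  calc Y = Y * expS (-w) * expS w := by rw [mul_assoc, expS_neg_mul_expS hw, mul_one]
    _ = 0 := by rw [h, zero_mul]

theorem expS_add (hu : constantCoeff u = 0) (hv : constantCoeff v = 0) :
    expS (u + v) = expS u * expS v := by
  have huv : constantCoeff (u + v) = 0 := by simp [hu, hv]
  refine sub_eq_zero.mp (eq_zero_of_pderiv_eq_mul_pderiv huv (by simp [constantCoeff_expS])
    fun s => ?_)
  rw [map_sub, Derivation.leibniz, pderiv_expS s huv, pderiv_expS s hu, pderiv_expS s hv,
    map_add, smul_eq_mul, smul_eq_mul]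
  ring

theorem expS_inj (hu : constantCoeff u = 0) (hv : constantCoeff v = 0) :
    expS u = expS v ↔ u = v := by
  refine ⟨fun h => pderiv.ext (fun s => (isUnit_expS u).mul_left_cancel ?_) (by rw [hu, hv]),
    congrArg expS⟩
  rw [← pderiv_expS s hu, h, pderiv_expS s hv]

theorem dvd_expS_sub_one (hu : constantCoeff u = 0) : u ∣ expS u - 1 := by
  refine ⟨fsum fun m => ((m + 1).factorial : ℚ)⁻¹ • u ^ m, ?_⟩
  rw [mul_fsum fun m => natCast_le_order_smul_pow hu _ m, expS,
    fsum_eq_add_fsum_succ fun m => natCast_le_order_smul_pow hu _ m]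
  simp only [pow_zero, Nat.factorial_zero, Nat.cast_one, inv_one, one_smul,
    add_sub_cancel_left, pow_succ', mul_smul_comm]

theorem sub_dvd_expS_sub_expS (hu : constantCoeff u = 0) (hv : constantCoeff v = 0) :
    u - v ∣ expS u - expS v := by
  have hsub : constantCoeff (u - v) = 0 := by simp [hu, hv]
  rw [← add_sub_cancel v u, expS_add hv hsub, ← mul_sub_one, add_sub_cancel_left]
  exact (dvd_expS_sub_one hsub).mul_left _

end exp

section log

variable {w : MvPowerSeries σ ℚ}

theorem constantCoeff_logS (w : MvPowerSeries σ ℚ) : constantCoeff (logS w) = 0 := by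
  simp [logS, constantCoeff_fsum]

theorem one_add_mul_fsum_neg_pow (hw : constantCoeff w = 0) :
    (1 + w) * fsum (fun m => (-w) ^ m) = 1 := by
  have hF : ∀ m : ℕ, (m : ℕ∞) ≤ ((-w) ^ m).order :=
    fun m => le_order_pow_of_constantCoeff_eq_zero m (by simp [hw])
  ext d
  rw [mul_fsum hF, coeff_fsum_of_degree_le (fun m => (hF m).trans (le_add_self.trans le_order_mul))
    le_rfl, ← map_sum, ← mul_sum, ← sub_neg_eq_add, mul_neg_geom_sum, map_sub,
    coeff_of_lt_order ((by exact_mod_cast d.degree.lt_succ_self : _ < _).trans_le (hF _)),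
    sub_zero]

theorem mul_pderiv_logS (s : σ) (hw : constantCoeff w = 0) :
    (1 + w) * pderiv ℚ s (logS w) = pderiv ℚ s w := by
  have hterm : ∀ m : ℕ, pderiv ℚ s (if m + 1 = 0 then 0
      else ((-1 : ℚ) ^ (m + 1 - 1) / (m + 1 : ℕ)) • w ^ (m + 1)) = (-w) ^ m * pderiv ℚ s w := by
    intro m
    rw [if_neg m.succ_ne_zero, Derivation.map_smul, pderiv_pow, Nat.add_sub_cancel, mul_assoc,
      ← nsmul_eq_mul, ← Nat.cast_smul_eq_nsmul ℚ, smul_smul, ← neg_one_smul ℚ w, smul_pow,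
      smul_mul_assoc]
    congr 1
    field_simp
  rw [logS, pderiv_fsum, if_pos rfl, map_zero, zero_add]
  simp only [hterm]
  rw [← fsum_mul (fun m => le_order_pow_of_constantCoeff_eq_zero m (by simp [hw])), ← mul_assoc,
    one_add_mul_fsum_neg_pow hw, one_mul]

theorem expS_logS (hw : constantCoeff w = 0) : expS (logS w) = 1 + w := by
  refine sub_eq_zero.mp (eq_zero_of_pderiv_eq_mul_pderiv (constantCoeff_logS w)
    (by simp [constantCoeff_expS, hw]) fun s => ?_)
  rw [map_sub, pderiv_expS s (constantCoeff_logS w), map_add, Derivation.map_one_eq_zero,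
    zero_add, ← mul_pderiv_logS s hw]
  ring

theorem eq_mul_expS_neg_logS {x z : MvPowerSeries σ ℚ} (hw : constantCoeff w = 0)
    (h : x = z * (1 + w)) : z = x * expS (-logS w) := by
  rw [h, ← expS_logS hw, mul_assoc, mul_comm (expS _), expS_neg_mul_expS (constantCoeff_logS w),
    mul_one]

end log

theorem eq_of_sub_mul_mul_expS_sub_one_eq {t z₁ z₂ : MvPowerSeries σ ℚ}
    (ht : constantCoeff t = 0) (h₁ : constantCoeff z₁ = 0) (h₂ : constantCoeff z₂ = 0)
    (h : z₁ - t * z₁ * (expS z₁ - 1) = z₂ - t * z₂ * (expS z₂ - 1)) : z₁ = z₂ := by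
  obtain ⟨G, hG⟩ := sub_dvd_expS_sub_expS h₁ h₂
  have hunit : IsUnit (1 - t * (expS z₁ - 1 + z₂ * G)) :=
    isUnit_iff_constantCoeff.mpr (by simp [ht])
  rw [← sub_eq_zero, ← hunit.mul_left_eq_zero]
  linear_combination h + t * z₂ * hG

theorem mul_pderiv_add_sub_eq_neg_logS (s : σ) {t x z P Hp Ha : MvPowerSeries σ ℚ}
    (ht : pderiv ℚ s t = 0) (hx : pderiv ℚ s x = 1) (hz0 : constantCoeff z = 0)
    (hz : z = x + t * P) (hxz : x = z * (1 - t * (expS z - 1)))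
    (hHa : Ha = expS z - 1 - z) (hHp : t * Hp = -(x * logS (-(t * (expS z - 1))))) :
    t * pderiv ℚ s (Hp + Ha - P) = -logS (-(t * (expS z - 1))) := by
  have hunit : IsUnit (1 - t * (expS z - 1)) :=
    isUnit_iff_constantCoeff.mpr (by simp [constantCoeff_expS])
  have hL := mul_pderiv_logS s (w := -(t * (expS z - 1))) (by simp [constantCoeff_expS])
  have hE := pderiv_expS s hz0
  have hdHp := congrArg (pderiv ℚ s) hHp
  have hdHa := congrArg (pderiv ℚ s) hHa
  have hdz := congrArg (pderiv ℚ s) hz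
  have hdx := congrArg (pderiv ℚ s) hxz
  simp only [map_add, map_sub, map_neg, Derivation.leibniz, Derivation.map_one_eq_zero, ht, hx,
    hE, smul_eq_mul] at hL hdHp hdHa hdz hdx
  -- `∂ log(1 − u)` is only known after multiplication by `1 − u`
  rw [← add_eq_zero_iff_eq_neg, ← hunit.mul_right_eq_zero, map_sub, map_add]
  linear_combination (1 - t * (expS z - 1)) * (hdHp + t * hdHa + hdz + hdx) - x * hL
    + t * expS z * pderiv ℚ s z * hxz

open MvPowerSeries in
theorem cyclic_hypertree_series_inversion_general
    (P Hp Ha H A z : MvPowerSeries (Fin 2) ℚ)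
    (hP : P = X 1 * (expS (X 1 + X 0 * P) - 1) *
        (1 - X 0 * (expS (X 1 + X 0 * P) - 1))⁻¹)
    (hHa : Ha = expS (X 1 + X 0 * P) - 1 - (X 1 + X 0 * P))
    (hHp : X 0 * Hp = -(X 1 * logS (-(X 0 * (expS (X 1 + X 0 * P) - 1)))))
    (hH : H = Hp + Ha - P)
    (hA : A = pderivS 1 H)
    (hz : z = X 1 + X 0 * P) :
    (z = X 1 * expS (X 0 * A) ∧ X 1 = z - X 0 * z * (expS z - 1)) ∧
    ∀ A' z' : MvPowerSeries (Fin 2) ℚ,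
      constantCoeff A' = 0 →
      (∀ d : Fin 2 →₀ ℕ, totalDeg d < 2 → coeff d z' = coeff d (X 1)) →
      z' = X 1 * expS (X 0 * A') →
      X 1 = z' - X 0 * z' * (expS z' - 1) →
      A' = A ∧ z' = z := by
  rw [← hz] at hP hHa hHp
  have hz0 : constantCoeff z = 0 := by simp [hz]
  have hPu : P * (1 - X 0 * (expS z - 1)) = X 1 * (expS z - 1) :=
    (MvPowerSeries.eq_mul_inv_iff_mul_eq (by simp [constantCoeff_expS])).mp hP
  have hxz : X 1 = z * (1 - X 0 * (expS z - 1)) := by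
    linear_combination (-(1 - X 0 * (expS z - 1))) * hz - X 0 * hPu
  have htA : X 0 * A = -logS (-(X 0 * (expS z - 1))) := by
    rw [hA, hH, pderivS_eq_pderiv]
    exact mul_pderiv_add_sub_eq_neg_logS 1 (pderiv_X_of_ne (by decide)) pderiv_X_self hz0 hz hxz
      hHa hHp
  have hzA : z = X 1 * expS (X 0 * A) := by
    rw [htA]
    exact eq_mul_expS_neg_logS (by simp) (by rw [hxz]; ring)
  have hx : X 1 = z - X 0 * z * (expS z - 1) := by linear_combination hxz
  refine ⟨⟨hzA, hx⟩, fun A' z' _ hz'low hz'A hz'x => ?_⟩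
  have hz'0 : constantCoeff z' = 0 := by
    simpa using hz'low 0 (by simp [totalDeg_eq_degree])
  have hz'z : z' = z :=
    eq_of_sub_mul_mul_expS_sub_one_eq (constantCoeff_X 0) hz'0 hz0 (hz'x.symm.trans hx)
  have hX : ∀ i : Fin 2, (X i : MvPowerSeries (Fin 2) ℚ) ≠ 0 :=
    fun _ => nonZeroDivisors.ne_zero X_mem_nonzeroDivisors
  refine ⟨mul_left_cancel₀ (hX 0) ((expS_inj (by simp) (by simp)).mp
    (mul_left_cancel₀ (hX 1) ?_)), hz'z⟩
  rw [← hz'A, hz'z, hzA]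

open MvPowerSeries in
/-- In `ℚ[[t,x]]` (with `t = X 0`, `x = X 1`): if `P` is the (unique) series with zero
constant term satisfying `P = x(E−1)/(1−t(E−1))` with `E = exp(x+tP)`,
`Hᵃ = E−1−(x+tP)`, `t·Hᵖ = −x·log(1−t(E−1))`, `H = Hᵖ+Hᵃ−P`, `A = ∂ₓH` and
`z = x+tP`, then `z = x·exp(tA)` and `x = z−tz(exp z−1)`, and `(A,z)` is the unique
pair with `A` of zero constant term and `z ≡ x` modulo total degree `≥ 2` satisfying
these two equations. -/
theorem cyclic_hypertree_series_inversion
    (P Hp Ha H A z : MvPowerSeries (Fin 2) ℚ)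
    (hP0 : constantCoeff P = 0)
    (hP : P = X 1 * (expS (X 1 + X 0 * P) - 1) *
        (1 - X 0 * (expS (X 1 + X 0 * P) - 1))⁻¹)
    (hPuniq : ∀ Q : MvPowerSeries (Fin 2) ℚ, constantCoeff Q = 0 →
      Q = X 1 * (expS (X 1 + X 0 * Q) - 1) *
        (1 - X 0 * (expS (X 1 + X 0 * Q) - 1))⁻¹ → Q = P)
    (hHa : Ha = expS (X 1 + X 0 * P) - 1 - (X 1 + X 0 * P))
    (hHp : X 0 * Hp = -(X 1 * logS (-(X 0 * (expS (X 1 + X 0 * P) - 1)))))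
    (hH : H = Hp + Ha - P)
    (hA : A = pderivS 1 H)
    (hz : z = X 1 + X 0 * P) :
    (z = X 1 * expS (X 0 * A) ∧ X 1 = z - X 0 * z * (expS z - 1)) ∧
    ∀ A' z' : MvPowerSeries (Fin 2) ℚ,
      constantCoeff A' = 0 →
      (∀ d : Fin 2 →₀ ℕ, totalDeg d < 2 → coeff d z' = coeff d (X 1)) →
      z' = X 1 * expS (X 0 * A') →
      X 1 = z' - X 0 * z' * (expS z' - 1) →
      A' = A ∧ z' = z :=
  cyclic_hypertree_series_inversion_general P Hp Ha H A z hP hHa hHp hH hA hz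
end

section
/- For all integers n ≥ 2 and k ≥ 1, the number of pairs (T, φ), where T is a cyclic hypertree on {1,…,n} with exactly k edges and φ is a flag of T, equals the number of ordered rooted hypertrees on {1,…,n} with exactly k edges. -/
/-- Number of strict chains `a = x₀ < x₁ < ⋯ < x_k = b` for the relation `r`. -/
noncomputable def nChains {α : Type*} (r : α → α → Prop) (a b : α) (k : ℕ) : ℕ :=
  Nat.card {f : Fin (k + 1) → α // f 0 = a ∧ f (Fin.last k) = b ∧
    ∀ i : Fin k, r (f i.castSucc) (f i.succ) ∧ f i.castSucc ≠ f i.succ}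

/-- The Möbius function of a finite poset `(α, r)`, via Philip Hall's formula
`μ(a,b) = Σ_k (−1)^k · #{chains a = x₀ < ⋯ < x_k = b}`. -/
noncomputable def mobius {α : Type*} [Finite α] (r : α → α → Prop) (a b : α) : ℤ :=
  ∑ k ∈ Finset.range (Nat.card α + 1), (-1 : ℤ) ^ k * nChains r a b k

section Hyper

variable {I : Type*} [DecidableEq I] [Fintype I]

/-- A walk in a hypergraph with edge set `E`: an alternating sequence of vertices and
edges, each edge containing the two adjacent vertices. -/
def IsWalk (E : Finset (Finset I)) (k : ℕ) (vs : Fin (k + 1) → I)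
    (es : Fin k → Finset I) : Prop :=
  (∀ i, es i ∈ E) ∧ ∀ i : Fin k, vs i.castSucc ∈ es i ∧ vs i.succ ∈ es i

/-- A hypergraph is connected if any two vertices are joined by a walk. -/
def HConnected (E : Finset (Finset I)) : Prop :=
  ∀ u v : I, ∃ (k : ℕ) (vs : Fin (k + 1) → I) (es : Fin k → Finset I),
    IsWalk E k vs es ∧ vs 0 = u ∧ vs (Fin.last k) = v

/-- A cycle: a walk of length `k ≥ 2` with pairwise distinct edges, pairwise distinct
vertices `v₀, …, v_{k-1}`, and `v_k = v₀`. -/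
def HasCycle (E : Finset (Finset I)) : Prop :=
  ∃ (k : ℕ) (vs : Fin (k + 1) → I) (es : Fin k → Finset I),
    2 ≤ k ∧ IsWalk E k vs es ∧ Function.Injective es ∧
      (∀ i j : Fin k, vs i.castSucc = vs j.castSucc → i = j) ∧
      vs (Fin.last k) = vs 0

/-- A hypertree on `I`: a nonempty set of edges of cardinality at least 2 which is
connected and has no cycle. -/
def IsHypertree (E : Finset (Finset I)) : Prop :=
  E.Nonempty ∧ (∀ a ∈ E, 2 ≤ a.card) ∧ HConnected E ∧ ¬ HasCycle E

/-- The set of hypertrees on a finite vertex set `I`. -/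
abbrev HypertreeOn (I : Type*) [DecidableEq I] [Fintype I] : Type _ :=
  {E : Finset (Finset I) // IsHypertree E}

/-- The hypertree order: `S ≤ T` iff every edge of `S` is a union of (one or more)
edges of `T`. -/
def HTle (S T : HypertreeOn I) : Prop :=
  ∀ a ∈ S.1, ∃ s : Finset (Finset I), s ⊆ T.1 ∧ s.Nonempty ∧ a = s.sup id

noncomputable instance : Fintype (HypertreeOn I) := Fintype.ofFinite _

/-- The minimum `0̂` of the hypertree poset: the hypertree whose single edge is all of `I`. -/
def botHT (I : Type*) [DecidableEq I] [Fintype I] (h : 2 ≤ Fintype.card I) :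
    HypertreeOn I := by
  refine ⟨{Finset.univ}, Finset.singleton_nonempty _, ?_, ?_, ?_⟩
  · intro a ha
    rw [Finset.mem_singleton] at ha
    subst ha
    simpa using h
  · intro u v
    refine ⟨1, ![u, v], ![Finset.univ], ⟨fun i => by simp [Fin.fin_one_eq_zero i],
      fun i => by simp⟩, rfl, ?_⟩
    show ![u, v] (Fin.last 1) = v
    rfl
  · rintro ⟨k, vs, es, hk, ⟨hesE, -⟩, hinj, -, -⟩
    have h0 := hesE ⟨0, by omega⟩
    have h1 := hesE ⟨1, by omega⟩
    rw [Finset.mem_singleton] at h0 h1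
    have h01 := hinj (h0.trans h1.symm)
    have : (0 : ℕ) = 1 := congrArg Fin.val h01
    omega

end Hyper
/-- A permutation of a set is a cyclic order (cyclic permutation) if it acts
transitively: any element is sent to any other by some power. -/
def IsCyclicPerm {β : Type*} (σ : Equiv.Perm β) : Prop :=
  ∀ a b : β, ∃ m : ℕ, (σ ^ m) a = b

/-- A cyclic hypertree on `I`: a hypertree together with, for each vertex `v`, a
cyclic order on the set of edges containing `v`. -/
def CyclicHT (I : Type*) [DecidableEq I] [Fintype I] : Type _ :=
  Σ T : HypertreeOn I,
    {c : ∀ v : I, Equiv.Perm {a : Finset I // a ∈ T.1 ∧ v ∈ a} //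
      ∀ v, IsCyclicPerm (c v)}

/-- `a` is the outgoing edge of the vertex `v ≠ r` toward the root `r`: the first edge
of a minimal (equivalently, vertex- and edge-injective) walk from `v` to `r`. -/
def OutgoingEdge {I : Type*} [DecidableEq I] [Fintype I] (E : Finset (Finset I))
    (r v : I) (a : Finset I) : Prop :=
  v ≠ r ∧ ∃ (k : ℕ) (vs : Fin (k + 1) → I) (es : Fin k → Finset I),
    IsWalk E k vs es ∧ vs 0 = v ∧ vs (Fin.last k) = r ∧
    Function.Injective vs ∧ Function.Injective es ∧
    ∃ h : 0 < k, es ⟨0, h⟩ = a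

/-- `a` is an entering edge of the vertex `v` with respect to the root `r`: an edge
containing `v` which is not the outgoing edge of `v` (in particular every edge
containing `r` is an entering edge of `r`). -/
def EnteringEdge {I : Type*} [DecidableEq I] [Fintype I] (E : Finset (Finset I))
    (r v : I) (a : Finset I) : Prop :=
  a ∈ E ∧ v ∈ a ∧ ¬ OutgoingEdge E r v a

/-- An ordered rooted hypertree on `I`: a hypertree together with a root vertex `r`
and, for each vertex `v`, a total order (given as an enumeration without repetition)
on the set of entering edges of `v`. -/
def OrderedRootedHT (I : Type*) [DecidableEq I] [Fintype I] : Type _ :=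
  Σ (T : HypertreeOn I) (r : I),
    ∀ v : I, {l : List {a : Finset I // EnteringEdge T.1 r v a} //
      l.Nodup ∧ ∀ a, a ∈ l}

/-!
Both sides fibre over the underlying hypertree `T`; write `d v` for the number of edges
containing `v`. A cyclic order on `d v` edges is one of `(d v - 1)!`, and `T` has `∑ v, d v`
flags, so the left fibre has `(∏ v, (d v - 1)!) * ∑ v, d v` elements. For a root `r`, every
vertex `v ≠ r` has exactly one outgoing edge, hence `d v - 1` entering edges, while `r` has
`d r`; the right fibre therefore has
`∑ r, (d r)! * ∏ v ≠ r, (d v - 1)! = ∑ r, d r * ∏ v, (d v - 1)!` elements. Uniqueness of the outgoing edge is where acyclicity enters: a hypergraph without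
cycles has an acyclic vertex–edge incidence graph, in which paths are unique.
-/

open Function SimpleGraph Finset Equiv Perm
open scoped Nat

section Incidence

variable {I : Type*}

def incidenceGraph (E : Finset (Finset I)) : SimpleGraph (I ⊕ Finset I) where
  Adj
    | .inl v, .inr a | .inr a, .inl v => a ∈ E ∧ v ∈ a
    | _, _ => False
  symm := ⟨by rintro (_ | _) (_ | _) h <;> exact h⟩
  loopless := ⟨by rintro (_ | _) h <;> exact h⟩

variable {E : Finset (Finset I)}

theorem IsWalk.tail {k : ℕ} {vs : Fin (k + 2) → I} {es : Fin (k + 1) → Finset I}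
    (h : IsWalk E (k + 1) vs es) : IsWalk E k (Fin.tail vs) (Fin.tail es) :=
  ⟨fun i => h.1 i.succ, fun i => by simpa only [Fin.tail, ← Fin.succ_castSucc] using h.2 i.succ⟩

theorem IsWalk.exists_incidenceWalk {k : ℕ} {vs : Fin (k + 1) → I} {es : Fin k → Finset I}
    (h : IsWalk E k vs es) {u w : I} (h0 : vs 0 = u) (hl : vs (Fin.last k) = w) :
    ∃ p : (incidenceGraph E).Walk (.inl u) (.inl w),
      (∀ x ∈ p.support, (∃ i, x = .inl (vs i)) ∨ ∃ i, x = .inr (es i)) ∧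
      (Injective vs → Injective es → p.IsPath) ∧
      ∀ hk : 0 < k, p.snd = .inr (es ⟨0, hk⟩) := by
  induction k generalizing u with
  | zero =>
    obtain rfl : u = w := h0.symm.trans hl
    refine ⟨.nil, fun x hx => .inl ⟨0, ?_⟩, fun _ _ => .nil, fun hk => absurd hk (lt_irrefl 0)⟩
    rw [Walk.support_nil, List.mem_singleton] at hx
    rw [hx, h0]
  | succ k ih =>
    obtain ⟨q, hq_supp, hq_path, -⟩ := ih h.tail rfl hl
    have h1 : (incidenceGraph E).Adj (.inl u) (.inr (es 0)) := ⟨h.1 0, h0 ▸ (h.2 0).1⟩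
    have h2 : (incidenceGraph E).Adj (.inr (es 0)) (.inl (Fin.tail vs 0)) := ⟨h.1 0, (h.2 0).2⟩
    have hq_supp' : ∀ x ∈ q.support, (∃ i, x = .inl (vs (Fin.succ i))) ∨
        ∃ i, x = .inr (es (Fin.succ i)) := hq_supp
    refine ⟨.cons h1 (.cons h2 q), ?_, fun hvi hei => ?_, fun _ => rfl⟩
    · simp only [Walk.support_cons, List.mem_cons]
      rintro x (rfl | rfl | hx)
      · exact .inl ⟨0, h0.symm ▸ rfl⟩
      · exact .inr ⟨0, rfl⟩
      · rcases hq_supp' x hx with ⟨i, rfl⟩ | ⟨i, rfl⟩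
        exacts [.inl ⟨_, rfl⟩, .inr ⟨_, rfl⟩]
    · have hu : ∀ x ∈ q.support, x ≠ .inl u ∧ x ≠ .inr (es 0) := by
        intro x hx
        rcases hq_supp' x hx with ⟨i, rfl⟩ | ⟨i, rfl⟩
        · exact ⟨fun he => Fin.succ_ne_zero i (hvi ((Sum.inl_injective he).trans h0.symm)),
            Sum.inl_ne_inr⟩
        · exact ⟨Sum.inr_ne_inl, fun he => Fin.succ_ne_zero i (hei (Sum.inr_injective he))⟩
      simp only [Walk.cons_isPath_iff, Walk.support_cons, List.mem_cons, not_or]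
      exact ⟨⟨hq_path (hvi.comp (Fin.succ_injective _)) (hei.comp (Fin.succ_injective _)),
        fun hx => (hu _ hx).2 rfl⟩, Sum.inl_ne_inr, fun hx => (hu _ hx).1 rfl⟩

theorem exists_isWalk_of_isPath {u w : I} :
    ∀ p : (incidenceGraph E).Walk (.inl u) (.inl w), p.IsPath →
    ∃ (k : ℕ) (vs : Fin (k + 1) → I) (es : Fin k → Finset I), IsWalk E k vs es ∧
      vs 0 = u ∧ vs (Fin.last k) = w ∧ Injective vs ∧ Injective es ∧ p.length = 2 * k ∧
      (∀ i, .inl (vs i) ∈ p.support) ∧ ∀ i, .inr (es i) ∈ p.support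
  | .nil, _ => ⟨0, fun _ => u, Fin.elim0, ⟨fun i => i.elim0, fun i => i.elim0⟩, rfl, rfl,
      fun _ _ _ => Subsingleton.elim (α := Fin 1) _ _, fun i => i.elim0, rfl, fun _ => by simp,
      fun i => i.elim0⟩
  | .cons (v := .inl _) h _, _ => h.elim
  | .cons (v := .inr _) _ (.cons (v := .inr _) h _), _ => h.elim
  | .cons (v := .inr a) h1 (.cons (v := .inl x) h2 q), hp => by
    rw [Walk.cons_isPath_iff, Walk.cons_isPath_iff] at hp
    obtain ⟨⟨hq, ha⟩, hu⟩ := hp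
    obtain ⟨k, vs, es, hw, h0, hl, hvi, hei, hlen, hvs, hes⟩ := exists_isWalk_of_isPath q hq
    refine ⟨k + 1, Fin.cons u vs, Fin.cons a es, ⟨?_, ?_⟩, rfl, hl, ?_, ?_, ?_, ?_, ?_⟩
    · exact Fin.cases h1.1 hw.1
    · refine Fin.cases ⟨h1.2, show vs 0 ∈ a from h0 ▸ h2.2⟩ fun i => ?_
      simpa only [Fin.cons_succ, ← Fin.succ_castSucc] using hw.2 i
    · refine Fin.cons_injective_iff.2 ⟨?_, hvi⟩
      rintro ⟨i, rfl⟩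
      exact hu (List.mem_cons_of_mem _ (hvs i))
    · refine Fin.cons_injective_iff.2 ⟨?_, hei⟩
      rintro ⟨i, rfl⟩
      exact ha (hes i)
    · rw [Walk.length_cons, Walk.length_cons, hlen]
      ring
    · refine Fin.cases (by simp) fun i => ?_
      simp [hvs i]
    · refine Fin.cases (by simp) fun i => ?_
      simp [hes i]

/-- An incidence cycle `v, a, x, …, v` gives the hypergraph cycle `x, …, v, a, x`; closing the
path at its end (`Fin.snoc`) keeps the repeated vertex out of the injectivity condition. -/
theorem hasCycle_of_isCycle {v : I} :
    ∀ c : (incidenceGraph E).Walk (.inl v) (.inl v), c.IsCycle → HasCycle E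
  | .nil, hc => (Walk.not_isCycle_nil hc).elim
  | .cons (v := .inl _) h _, _ => h.elim
  | .cons (v := .inr _) _ (.cons (v := .inr _) h _), _ => h.elim
  | .cons (v := .inr a) h1 (.cons (v := .inl x) h2 q), hc => by
    have hlen := hc.three_le_length
    rw [Walk.cons_isCycle_iff, Walk.cons_isPath_iff] at hc
    obtain ⟨⟨hq, ha⟩, -⟩ := hc
    obtain ⟨k, vs, es, hw, h0, hl, hvi, hei, hqlen, -, hes⟩ := exists_isWalk_of_isPath q hq
    refine ⟨k + 1, Fin.snoc vs x, Fin.snoc es a, ?_, ⟨?_, ?_⟩, ?_, ?_, ?_⟩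
    · simp only [Walk.length_cons, hqlen] at hlen
      omega
    · exact Fin.lastCases (by simpa using h1.1) fun i => by simpa using hw.1 i
    · refine Fin.lastCases ?_ fun i => ?_
      · simpa [hl] using ⟨h1.2, h2.2⟩
      · simpa only [Fin.snoc_castSucc, Fin.succ_castSucc] using hw.2 i
    · refine Fin.snoc_injective_iff.2 ⟨hei, ?_⟩
      rintro ⟨i, rfl⟩
      exact ha (hes i)
    · intro i j hij
      simp only [Fin.snoc_castSucc] at hij
      exact hvi hij
    · rw [Fin.snoc_last, ← Fin.castSucc_zero, Fin.snoc_castSucc, h0]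

theorem isAcyclic_incidenceGraph (h : ¬ HasCycle E) : (incidenceGraph E).IsAcyclic := by
  classical
  rintro (v | a) c hc
  · exact h (hasCycle_of_isCycle c hc)
  · cases c with
    | nil => exact Walk.not_isCycle_nil hc
    | @cons _ y _ h1 _ =>
      rcases y with v | b
      · exact h (hasCycle_of_isCycle _ (hc.rotate (u := .inl v) (by simp)))
      · exact h1.elim

end Incidence

section Enumerations

theorem nodup_and_forall_mem_iff_perm {α : Type*} [Fintype α] {l : List α} :
    (l.Nodup ∧ ∀ a, a ∈ l) ↔ l.Perm univ.toList :=
  ⟨fun h => (List.perm_ext_iff_of_nodup h.1 (nodup_toList _)).2 fun a => by simp [h.2 a],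
    fun h => ⟨h.nodup_iff.2 (nodup_toList _), fun a => h.mem_iff.2 (mem_toList.2 (mem_univ a))⟩⟩

theorem nodup_and_forall_mem_iff_mem_permutations {α : Type*} [Fintype α] [DecidableEq α]
    {l : List α} :
    (l.Nodup ∧ ∀ a, a ∈ l) ↔ l ∈ (univ.toList : List α).permutations.toFinset := by
  rw [List.mem_toFinset, List.mem_permutations, nodup_and_forall_mem_iff_perm]

variable {α : Type*} [Finite α]

instance : Finite {l : List α // l.Nodup ∧ ∀ a, a ∈ l} := by
  classical
  have := Fintype.ofFinite α
  simp_rw [nodup_and_forall_mem_iff_mem_permutations]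
  infer_instance

theorem card_nodup_complete_lists :
    Nat.card {l : List α // l.Nodup ∧ ∀ a, a ∈ l} = (Nat.card α)! := by
  classical
  have := Fintype.ofFinite α
  simp_rw [nodup_and_forall_mem_iff_mem_permutations]
  rw [Nat.card_eq_finsetCard, List.toFinset_card_of_nodup
    (List.nodup_permutations _ (nodup_toList _)), List.length_permutations, length_toList,
    Finset.card_univ, Nat.card_eq_fintype_card]

end Enumerations

section CyclicPerm

variable {β : Type*} [Fintype β] [DecidableEq β]

theorem isCyclicPerm_iff_cycleType_eq (hβ : 2 ≤ Fintype.card β) {σ : Perm β} :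
    IsCyclicPerm σ ↔ σ.cycleType = {Fintype.card β} := by
  constructor
  · intro h
    have hmove : ∀ x, σ x ≠ x := fun x hx =>
      let ⟨y, hy⟩ := Fintype.exists_ne_of_one_lt_card hβ x
      let ⟨m, hm⟩ := h x y
      hy (hm ▸ pow_apply_eq_self_of_apply_eq_self hx m)
    obtain ⟨x⟩ : Nonempty β := Fintype.card_pos_iff.1 (by omega)
    have hcyc : σ.IsCycle := ⟨x, hmove x, fun y _ =>
      let ⟨m, hm⟩ := h x y; ⟨m, by rwa [zpow_natCast]⟩⟩
    rw [hcyc.cycleType, eq_univ_of_forall fun x => Perm.mem_support.2 (hmove x), Finset.card_univ]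
  · intro h x y
    have hcyc : σ.IsCycle := card_cycleType_eq_one.1 (by rw [h, Multiset.card_singleton])
    have hsupp : σ.support = univ :=
      eq_univ_of_card _ (by rw [← sum_cycleType, h, Multiset.sum_singleton])
    exact (hcyc.sameCycle (Perm.mem_support.1 (hsupp ▸ mem_univ x))
      (Perm.mem_support.1 (hsupp ▸ mem_univ y))).exists_nat_pow_eq

theorem card_isCyclicPerm [Nonempty β] :
    Nat.card {σ : Perm β // IsCyclicPerm σ} = (Nat.card β - 1)! := by
  rw [Nat.card_eq_fintype_card (α := β)]
  obtain hβ | hβ : Fintype.card β = 1 ∨ 2 ≤ Fintype.card β := by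
    have := Fintype.card_pos (α := β); omega
  · have : Subsingleton β := Fintype.card_le_one_iff_subsingleton.1 hβ.le
    have hall : ∀ σ : Perm β, IsCyclicPerm σ := fun _ _ _ => ⟨0, Subsingleton.elim _ _⟩
    rw [Nat.card_congr (Equiv.subtypeUnivEquiv hall), Nat.card_perm, Nat.card_eq_fintype_card, hβ]
    rfl
  · simp_rw [isCyclicPerm_iff_cycleType_eq hβ]
    rw [Nat.card_eq_fintype_card, Fintype.card_subtype,
      card_of_cycleType_singleton hβ le_rfl, Nat.choose_self, mul_one]

end CyclicPerm

section Degree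

variable {I : Type*} [DecidableEq I]

def hdegree (E : Finset (Finset I)) (v : I) : ℕ := #{a ∈ E | v ∈ a}

theorem card_edgesAt (E : Finset (Finset I)) (v : I) :
    Nat.card {a : Finset I // a ∈ E ∧ v ∈ a} = hdegree E v := by
  rw [hdegree, ← Nat.card_eq_finsetCard]
  exact Nat.card_congr (Equiv.subtypeEquivRight fun _ => by rw [Finset.mem_filter])

end Degree

section Rooted

variable {I : Type*} [DecidableEq I] [Fintype I] {E : Finset (Finset I)} {r v : I}
  {a b : Finset I}

theorem OutgoingEdge.mem (h : OutgoingEdge E r v a) : a ∈ E ∧ v ∈ a := by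
  obtain ⟨-, k, vs, es, hw, h0, -, -, -, hk, rfl⟩ := h
  exact ⟨hw.1 _, h0 ▸ (hw.2 ⟨0, hk⟩).1⟩

theorem exists_outgoingEdge (hE : HConnected E) (hvr : v ≠ r) : ∃ a, OutgoingEdge E r v a := by
  classical
  obtain ⟨k, vs, es, hw, h0, hl⟩ := hE v r
  obtain ⟨p, -⟩ := hw.exists_incidenceWalk h0 hl
  obtain ⟨m, ws, fs, hw', h0', hl', hwi, hfi, -⟩ :=
    exists_isWalk_of_isPath p.bypass p.bypass_isPath
  have hm : 0 < m := Nat.pos_of_ne_zero fun hm => by subst hm; exact hvr (h0'.symm.trans hl')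
  exact ⟨fs ⟨0, hm⟩, hvr, m, ws, fs, hw', h0', hl', hwi, hfi, hm, rfl⟩

theorem OutgoingEdge.unique (hE : ¬ HasCycle E) (ha : OutgoingEdge E r v a)
    (hb : OutgoingEdge E r v b) : a = b := by
  obtain ⟨-, k, vs, es, hw, h0, hl, hvi, hei, hk, rfl⟩ := ha
  obtain ⟨-, m, ws, fs, hw', h0', hl', hwi, hfi, hm, rfl⟩ := hb
  obtain ⟨p, -, hp, hp_snd⟩ := hw.exists_incidenceWalk h0 hl
  obtain ⟨q, -, hq, hq_snd⟩ := hw'.exists_incidenceWalk h0' hl'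
  have hpq : p = q := congrArg Subtype.val <|
    ((isAcyclic_incidenceGraph hE).subsingleton_path _ _).elim ⟨p, hp hvi hei⟩ ⟨q, hq hwi hfi⟩
  apply Sum.inr_injective
  rw [← hp_snd hk, ← hq_snd hm, hpq]

theorem IsHypertree.exists_mem_edge (hT : IsHypertree E) (v : I) : ∃ a ∈ E, v ∈ a := by
  obtain ⟨a, ha⟩ := hT.1
  obtain ⟨u, -, hu⟩ := Finset.exists_mem_ne (hT.2.1 a ha) v
  obtain ⟨b, hb⟩ := exists_outgoingEdge hT.2.2.1 hu.symm
  exact ⟨b, hb.mem⟩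

theorem IsHypertree.hdegree_pos (hT : IsHypertree E) (v : I) : 0 < hdegree E v :=
  let ⟨a, ha, hva⟩ := hT.exists_mem_edge v
  Finset.card_pos.2 ⟨a, Finset.mem_filter.2 ⟨ha, hva⟩⟩

theorem IsHypertree.card_enteringEdge_of_ne (hT : IsHypertree E) (hvr : v ≠ r) :
    Nat.card {b // EnteringEdge E r v b} = hdegree E v - 1 := by
  obtain ⟨a, ha⟩ := exists_outgoingEdge hT.2.2.1 hvr
  have key : ∀ b, EnteringEdge E r v b ↔ b ∈ ({b ∈ E | v ∈ b} : Finset _).erase a := by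
    intro b
    rw [Finset.mem_erase, Finset.mem_filter]
    exact ⟨fun ⟨hbE, hvb, hb⟩ => ⟨fun h => hb (h ▸ ha), hbE, hvb⟩,
      fun ⟨hba, hbE, hvb⟩ => ⟨hbE, hvb, fun hb => hba (hb.unique hT.2.2.2 ha)⟩⟩
  rw [Nat.card_congr (Equiv.subtypeEquivRight key), Nat.card_eq_finsetCard,
    Finset.card_erase_of_mem (Finset.mem_filter.2 ha.mem), hdegree]

theorem card_enteringEdge_self (E : Finset (Finset I)) (r : I) :
    Nat.card {b // EnteringEdge E r r b} = hdegree E r := by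
  rw [← card_edgesAt]
  exact Nat.card_congr (Equiv.subtypeEquivRight fun _ =>
    ⟨fun h => ⟨h.1, h.2.1⟩, fun h => ⟨h.1, h.2, fun ho => ho.1 rfl⟩⟩)

end Rooted

section Counting

variable {I : Type*} [DecidableEq I] [Fintype I] {E : Finset (Finset I)}

theorem IsHypertree.card_cyclicOrders (hT : IsHypertree E) :
    Nat.card (∀ v, {c : Perm {a // a ∈ E ∧ v ∈ a} // IsCyclicPerm c}) =
      ∏ v, (hdegree E v - 1)! := by
  rw [Nat.card_pi]
  refine prod_congr rfl fun v _ => ?_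
  obtain ⟨a, ha⟩ := hT.exists_mem_edge v
  have : Nonempty {a // a ∈ E ∧ v ∈ a} := ⟨⟨a, ha⟩⟩
  rw [card_isCyclicPerm, card_edgesAt]

theorem card_flags (E : Finset (Finset I)) :
    Nat.card {q : I × Finset I // q.2 ∈ E ∧ q.1 ∈ q.2} = ∑ v, hdegree E v := by
  rw [Nat.card_congr (subtypeProdEquivSigmaSubtype fun v a => a ∈ E ∧ v ∈ a), Nat.card_sigma]
  exact sum_congr rfl fun v _ => card_edgesAt E v

theorem IsHypertree.card_enteringOrders (hT : IsHypertree E) (r : I) :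
    Nat.card (∀ v, {l : List {a // EnteringEdge E r v a} // l.Nodup ∧ ∀ a, a ∈ l}) =
      hdegree E r * ∏ v, (hdegree E v - 1)! := by
  simp_rw [Nat.card_pi, card_nodup_complete_lists]
  rw [Fintype.prod_eq_mul_prod_compl r, Fintype.prod_eq_mul_prod_compl r, card_enteringEdge_self,
    ← mul_assoc, Nat.mul_factorial_pred (hT.hdegree_pos r).ne']
  congr 1
  refine prod_congr rfl fun v hv => ?_
  rw [hT.card_enteringEdge_of_ne (by simpa using hv)]

theorem card_flagged_cyclicHT (k : ℕ) :
    Nat.card {p : CyclicHT I × (I × Finset I) //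
        p.1.1.1.card = k ∧ p.2.2 ∈ p.1.1.1 ∧ p.2.1 ∈ p.2.2} =
      ∑ T : {T : HypertreeOn I // T.1.card = k},
        (∏ v, (hdegree T.1.1 v - 1)!) * ∑ v, hdegree T.1.1 v := by
  let e : {p : CyclicHT I × (I × Finset I) //
        p.1.1.1.card = k ∧ p.2.2 ∈ p.1.1.1 ∧ p.2.1 ∈ p.2.2} ≃
      Σ T : {T : HypertreeOn I // T.1.card = k},
        (∀ v, {c : Perm {a // a ∈ T.1.1 ∧ v ∈ a} // IsCyclicPerm c}) ×
          {q : I × Finset I // q.2 ∈ T.1.1 ∧ q.1 ∈ q.2} :=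
    { toFun := fun p => ⟨⟨p.1.1.1, p.2.1⟩, fun v => ⟨p.1.1.2.1 v, p.1.1.2.2 v⟩,
        ⟨p.1.2, p.2.2⟩⟩
      invFun := fun x => ⟨(⟨x.1.1, fun v => (x.2.1 v).1, fun v => (x.2.1 v).2⟩, x.2.2.1),
        x.1.2, x.2.2.2⟩
      left_inv := fun _ => rfl
      right_inv := fun _ => rfl }
  rw [Nat.card_congr e, Nat.card_sigma]
  exact sum_congr rfl fun T _ => by rw [Nat.card_prod, T.1.2.card_cyclicOrders, card_flags]

theorem card_orderedRootedHT (k : ℕ) :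
    Nat.card {o : OrderedRootedHT I // o.1.1.card = k} =
      ∑ T : {T : HypertreeOn I // T.1.card = k},
        ∑ r, hdegree T.1.1 r * ∏ v, (hdegree T.1.1 v - 1)! := by
  let e : {o : OrderedRootedHT I // o.1.1.card = k} ≃
      Σ T : {T : HypertreeOn I // T.1.card = k}, Σ r : I,
        ∀ v, {l : List {a // EnteringEdge T.1.1 r v a} // l.Nodup ∧ ∀ a, a ∈ l} :=
    { toFun := fun o => ⟨⟨o.1.1, o.2⟩, o.1.2⟩
      invFun := fun x => ⟨⟨x.1.1, x.2⟩, x.1.2⟩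
      left_inv := fun _ => rfl
      right_inv := fun _ => rfl }
  rw [Nat.card_congr e, Nat.card_sigma]
  exact sum_congr rfl fun T _ => by
    rw [Nat.card_sigma]
    exact sum_congr rfl fun r _ => T.1.2.card_enteringOrders r

end Counting

theorem flagged_cyclic_eq_ordered_rooted_general (n k : ℕ) :
    Nat.card {p : CyclicHT (Fin n) × (Fin n × Finset (Fin n)) //
        p.1.1.1.card = k ∧ p.2.2 ∈ p.1.1.1 ∧ p.2.1 ∈ p.2.2}
      = Nat.card {o : OrderedRootedHT (Fin n) // o.1.1.card = k} := by
  rw [card_flagged_cyclicHT, card_orderedRootedHT]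
  refine sum_congr rfl fun T _ => ?_
  rw [mul_sum]
  exact sum_congr rfl fun r _ => mul_comm _ _

/-- For `n ≥ 2`, `k ≥ 1`: the number of pairs (cyclic hypertree on `{1,…,n}` with `k`
edges, flag) equals the number of ordered rooted hypertrees on `{1,…,n}` with `k`
edges. -/
theorem flagged_cyclic_eq_ordered_rooted (n k : ℕ) (hn : 2 ≤ n) (hk : 1 ≤ k) :
    Nat.card {p : CyclicHT (Fin n) × (Fin n × Finset (Fin n)) //
        p.1.1.1.card = k ∧ p.2.2 ∈ p.1.1.1 ∧ p.2.1 ∈ p.2.2}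
      = Nat.card {o : OrderedRootedHT (Fin n) // o.1.1.card = k} :=
  flagged_cyclic_eq_ordered_rooted_general n k
end

section
/- For every integer n ≥ 1, the characteristic polynomial of the poset F_n of rooted forests on {1,…,n} satisfies Σ_{F ∈ F_n} μ(0̂,F)·s^{(n−1)−|E_F|} = (s−n)^{n−1} in ℤ[s], where E_F is the edge set of F and 0̂ is the empty forest. -/
/-- A rooted forest on `I`: a set `E` of oriented edges `(b, a)` (from `b` toward its
parent `a`) with `b ≠ a`, such that every vertex is the source of at most one edge and
the graph contains no cycle (equivalently, no closed walk of positive length following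
the orientations). -/
def IsRootedForest {I : Type*} (E : Finset (I × I)) : Prop :=
  (∀ e ∈ E, e.1 ≠ e.2) ∧
  (∀ e ∈ E, ∀ e' ∈ E, e.1 = e'.1 → e = e') ∧
  ¬ ∃ (k : ℕ) (f : Fin (k + 2) → I), f (Fin.last (k + 1)) = f 0 ∧
      ∀ i : Fin (k + 1), (f i.castSucc, f i.succ) ∈ E

/-- The poset of rooted forests on `I`, ordered by inclusion of edge sets. -/
abbrev ForestOn (I : Type*) [DecidableEq I] [Fintype I] : Type _ :=
  {E : Finset (I × I) // IsRootedForest E}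

/-- The empty rooted forest (the minimum `0̂` of the poset of rooted forests). -/
def emptyForest (I : Type*) [DecidableEq I] [Fintype I] : ForestOn I :=
  ⟨∅, by simp, by simp, by
    rintro ⟨k, f, -, hw⟩
    exact absurd (hw 0) (Finset.notMem_empty _)⟩

noncomputable instance {I : Type*} [DecidableEq I] [Fintype I] : Fintype (ForestOn I) :=
  Fintype.ofFinite _

/-!
Every subset of a forest is a forest, so each lower interval `[0̂, F]` of `F_n` is a Boolean
lattice and `μ(0̂, F) = (-1)^|E_F|`; here `μ` is Hall's chain count, which satisfies the
recursion `Σ_{a ≤ c ≤ b} μ(a, c) = δ_{ab}` determining it. The characteristic polynomial is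
therefore `Σ_k (-1)^k f_k s^(n-1-k)`, where `f_k` is the number of forests with `k` edges.

A forest with `k` edges and `n - k` roots grows to one with `k + 1` edges by adding an edge
`(b, a)` with `b` a root and `a` outside the tree of `b`: there are `n (n - k) - n` such
edges. Double counting pairs (forest, edge) gives `(k + 1) f_(k+1) = n (n - 1 - k) f_k`, so
`f_k = C(n-1, k) n^k`, and the binomial theorem gives `(s - n)^(n-1)`.
-/

open Finset Relation

section Hall

variable {α : Type*}

abbrev StrictChain (r : α → α → Prop) (a b : α) (k : ℕ) : Type _ :=
  {f : Fin (k + 1) → α // f 0 = a ∧ f (Fin.last k) = b ∧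
    ∀ i : Fin k, r (f i.castSucc) (f i.succ) ∧ f i.castSucc ≠ f i.succ}

lemma nChains_eq_card (r : α → α → Prop) (a b : α) (k : ℕ) :
    nChains r a b k = Nat.card (StrictChain r a b k) := rfl

lemma nChains_zero (r : α → α → Prop) (a b : α) [Decidable (a = b)] :
    nChains r a b 0 = if a = b then 1 else 0 := by
  split_ifs with h
  · subst h
    refine Nat.card_eq_one_iff_unique.2 ⟨⟨fun f g => Subtype.ext (funext fun i => ?_)⟩,
      ⟨⟨fun _ => a, rfl, rfl, fun i => i.elim0⟩⟩⟩
    rw [Fin.fin_one_eq_zero i, f.2.1, g.2.1]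
  · exact Nat.card_eq_zero.2 (Or.inl ⟨fun f => h (f.2.1.symm.trans f.2.2.1)⟩)

def StrictChain.succEquiv (r : α → α → Prop) (a b : α) (k : ℕ) :
    StrictChain r a b (k + 1) ≃ Σ c : {c // r c b ∧ c ≠ b}, StrictChain r a c k where
  toFun f := ⟨⟨f.1 (Fin.last k).castSucc, by simpa [f.2.2.1] using f.2.2.2 (Fin.last k)⟩,
    ⟨Fin.init f.1, f.2.1, rfl, fun i => by simpa [Fin.init] using f.2.2.2 i.castSucc⟩⟩
  invFun g := ⟨Fin.snoc g.2.1 b, by simpa using g.2.2.1, by simp, fun i => by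
    refine Fin.lastCases ?_ (fun j => ?_) i
    · simp [g.2.2.2.1, g.1.2]
    · simpa only [Fin.succ_castSucc, Fin.snoc_castSucc] using g.2.2.2.2 j⟩
  left_inv f := Subtype.ext (by simp [← f.2.2.1])
  right_inv g := Sigma.subtype_ext (Subtype.ext (by simp [g.2.2.2.1])) (by simp)

lemma nChains_succ [Fintype α] (r : α → α → Prop) [DecidableRel r] [DecidableEq α]
    (a b : α) (k : ℕ) :
    nChains r a b (k + 1) = ∑ c with r c b ∧ c ≠ b, nChains r a c k := by
  rw [nChains_eq_card, Nat.card_congr (StrictChain.succEquiv r a b k), Nat.card_sigma,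
    Finset.sum_subtype _ (fun _ => Finset.mem_filter_univ _)]
  rfl

end Hall

section Mobius

variable {α : Type*} [Fintype α] [PartialOrder α]

lemma nChains_le_eq_zero {a b : α} {k : ℕ} (hk : Fintype.card α ≤ k) :
    nChains (· ≤ ·) a b k = 0 := by
  refine Nat.card_eq_zero.2 (Or.inl ⟨fun f => ?_⟩)
  have hf : StrictMono f.1 :=
    Fin.strictMono_iff_lt_succ.2 fun i => lt_of_le_of_ne (f.2.2.2 i).1 (f.2.2.2 i).2
  have := Fintype.card_le_of_injective _ hf.injective
  simp only [Fintype.card_fin] at this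
  omega

variable [DecidableEq α] [DecidableLE α] [DecidableLT α]

lemma nChains_le_succ (a b : α) (k : ℕ) :
    nChains (· ≤ ·) a b (k + 1) = ∑ c with c < b, nChains (· ≤ ·) a c k := by
  simp only [nChains_succ, ← lt_iff_le_and_ne]

lemma mobius_eq_sub_sum_lt (a b : α) :
    mobius (· ≤ ·) a b =
      (if a = b then 1 else 0) - ∑ c with c < b, mobius (· ≤ ·) a c := by
  have htrunc (c : α) : mobius (· ≤ ·) a c =
      ∑ k ∈ range (Nat.card α), (-1 : ℤ) ^ k * nChains (· ≤ ·) a c k := by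
    rw [mobius, sum_range_succ, nChains_le_eq_zero (Nat.card_eq_fintype_card.ge), Nat.cast_zero,
      mul_zero, add_zero]
  calc mobius (· ≤ ·) a b
      = nChains (· ≤ ·) a b 0 + ∑ k ∈ range (Nat.card α),
          (-1 : ℤ) ^ (k + 1) * nChains (· ≤ ·) a b (k + 1) := by
        rw [mobius, sum_range_succ', pow_zero, one_mul, add_comm]
    _ = (if a = b then 1 else 0) - ∑ k ∈ range (Nat.card α), ∑ c with c < b,
          (-1 : ℤ) ^ k * nChains (· ≤ ·) a c k := by
        simp [nChains_zero, nChains_le_succ, pow_succ, mul_sum, sub_eq_add_neg, ← sum_neg_distrib]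
    _ = (if a = b then 1 else 0) - ∑ c with c < b, mobius (· ≤ ·) a c := by
        rw [sum_comm]
        simp only [htrunc]

lemma sum_le_eq_add_sum_lt {M : Type*} [AddCommMonoid M] (f : α → M) (b : α) :
    ∑ c with c ≤ b, f c = f b + ∑ c with c < b, f c := by
  have : ({c | c ≤ b} : Finset α) = insert b ({c | c < b} : Finset α) := by
    ext c
    simp [le_iff_lt_or_eq, or_comm]
  rw [this, sum_insert (by simp)]

lemma sum_le_mobius (a b : α) :
    ∑ c with c ≤ b, mobius (· ≤ ·) a c = if a = b then 1 else 0 := by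
  rw [sum_le_eq_add_sum_lt, mobius_eq_sub_sum_lt, sub_add_cancel]

lemma mobius_eq_of_sum_le {a : α} {f : α → ℤ}
    (hf : ∀ b, ∑ c with c ≤ b, f c = if a = b then 1 else 0) (b : α) :
    mobius (· ≤ ·) a b = f b := by
  induction b using WellFoundedLT.induction with
  | _ b ih =>
    have hμ := sum_le_mobius a b
    have hfb := hf b
    rw [sum_le_eq_add_sum_lt] at hμ hfb
    rw [sum_congr rfl fun c hc => ih c (mem_filter.1 hc).2] at hμ
    linarith

end Mobius

lemma Relation.transGen_iff_exists_fin {α : Type*} {r : α → α → Prop} {x y : α} :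
    TransGen r x y ↔ ∃ (k : ℕ) (f : Fin (k + 2) → α),
      f 0 = x ∧ f (Fin.last (k + 1)) = y ∧ ∀ i : Fin (k + 1), r (f i.castSucc) (f i.succ) := by
  constructor
  · intro h
    induction h with
    | @single y h => exact ⟨0, ![x, y], rfl, rfl, fun i => by fin_cases i; simpa using h⟩
    | @tail y z _ h ih =>
      obtain ⟨k, f, h0, hl, hf⟩ := ih
      refine ⟨k + 1, Fin.snoc f z, by simpa using h0, by simp, fun i => ?_⟩
      refine Fin.lastCases ?_ (fun j => ?_) i
      · simpa [hl] using h
      · simpa only [Fin.succ_castSucc, Fin.snoc_castSucc] using hf j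
  · rintro ⟨k, f, rfl, rfl, hf⟩
    have (i : Fin (k + 1)) : TransGen r (f 0) (f i.succ) := by
      induction i using Fin.induction with
      | zero => exact .single (hf 0)
      | succ j ih => exact ih.tail (hf j.succ)
    exact this (Fin.last k)

namespace RootedForest

variable {I : Type*}

def Adj (E : Finset (I × I)) (b a : I) : Prop := (b, a) ∈ E

def IsRoot (E : Finset (I × I)) (b : I) : Prop := ∀ a, (b, a) ∉ E

lemma reflTransGen_adj_insert [DecidableEq I] {E : Finset (I × I)} {e : I × I} {u v : I}
    (h : ReflTransGen (Adj (insert e E)) u v) :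
    ReflTransGen (Adj E) u v ∨ ReflTransGen (Adj E) u e.1 ∧ ReflTransGen (Adj E) e.2 v := by
  induction h with
  | refl => exact .inl .refl
  | @tail x y _ hxy ih =>
    rcases Finset.mem_insert.1 hxy with rfl | hxy
    · exact .inr ⟨ih.elim id And.left, .refl⟩
    · exact ih.imp (·.tail hxy) (And.imp_right (·.tail hxy))

end RootedForest

open RootedForest

lemma isRootedForest_iff {I : Type*} {E : Finset (I × I)} :
    IsRootedForest E ↔
      (∀ e ∈ E, ∀ e' ∈ E, e.1 = e'.1 → e = e') ∧ ∀ x, ¬ TransGen (Adj E) x x := by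
  have hcycle : (∃ (k : ℕ) (f : Fin (k + 2) → I), f (Fin.last (k + 1)) = f 0 ∧
      ∀ i : Fin (k + 1), (f i.castSucc, f i.succ) ∈ E) ↔ ∃ x, TransGen (Adj E) x x := by
    simp only [transGen_iff_exists_fin]
    constructor
    · rintro ⟨k, f, hf, hw⟩
      exact ⟨f 0, k, f, rfl, hf, hw⟩
    · rintro ⟨x, k, f, rfl, hf, hw⟩
      exact ⟨k, f, hf, hw⟩
  rw [IsRootedForest, hcycle, not_exists]
  refine ⟨fun ⟨_, h, h'⟩ => ⟨h, h'⟩, fun ⟨h, h'⟩ => ⟨?_, h, h'⟩⟩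
  rintro ⟨b, a⟩ he (rfl : b = a)
  exact h' b (.single he)

namespace IsRootedForest

variable {I : Type*} {E E' : Finset (I × I)} {e : I × I}

lemma mono (hE : IsRootedForest E) (h : E' ⊆ E) : IsRootedForest E' :=
  ⟨fun e he => hE.1 e (h he), fun e he e' he' hee => hE.2.1 e (h he) e' (h he') hee,
    fun ⟨k, f, hc, hw⟩ => hE.2.2 ⟨k, f, hc, fun i => h (hw i)⟩⟩

lemma irrefl (hE : IsRootedForest E) (x : I) : ¬ TransGen (Adj E) x x :=
  (isRootedForest_iff.1 hE).2 x

lemma rightUnique (hE : IsRootedForest E) : Relator.RightUnique (Adj E) :=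
  fun _ _ _ h h' => congrArg Prod.snd (hE.2.1 _ h _ h' rfl)

lemma existsUnique_root [Finite I] (hE : IsRootedForest E) (a : I) :
    ∃! r, IsRoot E r ∧ ReflTransGen (Adj E) a r := by
  have : IsTrans I (flip (TransGen (Adj E))) := ⟨fun _ _ _ h h' => h'.trans h⟩
  have : Std.Irrefl (flip (TransGen (Adj E))) := ⟨hE.irrefl⟩
  have hwf : WellFounded (flip (Adj E)) :=
    Subrelation.wf (r := flip (TransGen (Adj E))) (fun h => TransGen.single h)
      (Finite.wellFounded_of_trans_of_irrefl _)
  refine (existsUnique_of_exists_of_unique ?_ ?_)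
  · induction a using hwf.induction with
    | _ a ih =>
      by_cases ha : IsRoot E a
      · exact ⟨a, ha, .refl⟩
      · obtain ⟨c, hc⟩ := not_forall_not.1 ha
        obtain ⟨r, hr, hcr⟩ := ih c hc
        exact ⟨r, hr, .head hc hcr⟩
  · rintro r r' ⟨hr, har⟩ ⟨hr', har'⟩
    rcases ReflTransGen.total_of_right_unique hE.rightUnique har har' with h | h
    · exact (h.cases_head.resolve_right fun ⟨c, hc, _⟩ => hr c hc)
    · exact (h.cases_head.resolve_right fun ⟨c, hc, _⟩ => hr' c hc).symm

lemma insert [DecidableEq I] (hE : IsRootedForest E) (hroot : IsRoot E e.1)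
    (hcycle : ¬ ReflTransGen (Adj E) e.2 e.1) : IsRootedForest (insert e E) := by
  refine isRootedForest_iff.2 ⟨?_, fun x hx => ?_⟩
  · intro d hd d' hd' hdd'
    rcases Finset.mem_insert.1 hd with rfl | hdE <;>
      rcases Finset.mem_insert.1 hd' with rfl | hd'E
    · rfl
    · exact (hroot d'.2 (hdd' ▸ hd'E)).elim
    · exact (hroot d.2 (hdd'.symm ▸ hdE)).elim
    · exact hE.2.1 d hdE d' hd'E hdd'
  obtain ⟨y, hxy, hyx⟩ := TransGen.head'_iff.1 hx
  rcases Finset.mem_insert.1 hxy with rfl | hxy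
  · exact hcycle ((reflTransGen_adj_insert hyx).elim id And.left)
  · rcases reflTransGen_adj_insert hyx with hyx | ⟨hyb, hax⟩
    · exact hE.irrefl x (.head' hxy hyx)
    · exact hcycle ((hax.tail hxy).trans hyb)

lemma isRoot_erase [DecidableEq I] (hE : IsRootedForest E) (he : e ∈ E) :
    IsRoot (E.erase e) e.1 := fun _ ha =>
  (Finset.mem_erase.1 ha).1 (hE.2.1 _ (Finset.mem_of_mem_erase ha) e he rfl)

lemma not_reflTransGen_erase [DecidableEq I] (hE : IsRootedForest E) (he : e ∈ E) :
    ¬ ReflTransGen (Adj (E.erase e)) e.2 e.1 := fun h =>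
  hE.irrefl e.1 (.head' he (ReflTransGen.mono (fun _ _ => Finset.mem_of_mem_erase) _ _ h))

end IsRootedForest

namespace RootedForest

variable {I : Type*} [Fintype I] [DecidableEq I] {E : Finset (I × I)}

def roots (E : Finset (I × I)) : Finset I := univ \ E.image Prod.fst

lemma mem_roots {b : I} : b ∈ roots E ↔ IsRoot E b := by
  simp [roots, IsRoot]

lemma card_roots (hE : IsRootedForest E) : #(roots E) = Fintype.card I - #E := by
  rw [roots, card_univ_sdiff, card_image_of_injOn fun e he e' he' => hE.2.1 e he e' he']

lemma card_edges_lt [Nonempty I] (hE : IsRootedForest E) : #E < Fintype.card I := by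
  obtain ⟨r, ⟨hr, -⟩, -⟩ := hE.existsUnique_root (Classical.arbitrary I)
  have := card_pos.2 ⟨r, mem_roots.2 hr⟩
  rw [card_roots hE] at this
  omega

open scoped Classical in
lemma card_filter_reflTransGen_roots (hE : IsRootedForest E) :
    #{p ∈ roots E ×ˢ univ | ReflTransGen (Adj E) p.2 p.1} = Fintype.card I := by
  refine card_bij (fun p _ => p.2) (fun _ _ => mem_univ _) ?_ ?_
  · rintro ⟨r, a⟩ hp ⟨r', a'⟩ hp' (rfl : a = a')
    simp only [mem_filter, mem_product, mem_roots] at hp hp'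
    rw [(hE.existsUnique_root a).unique ⟨hp.1.1, hp.2⟩ ⟨hp'.1.1, hp'.2⟩]
  · intro a _
    obtain ⟨r, ⟨hr, har⟩, -⟩ := hE.existsUnique_root a
    exact ⟨(r, a), by simp [mem_roots.2 hr, har], rfl⟩

open scoped Classical in
/-- The edges whose insertion keeps the rooted forest `E` a rooted forest. -/
noncomputable def extensions (E : Finset (I × I)) : Finset (I × I) :=
  {p ∈ roots E ×ˢ univ | ¬ ReflTransGen (Adj E) p.2 p.1}

lemma mem_extensions {e : I × I} :
    e ∈ extensions E ↔ IsRoot E e.1 ∧ ¬ ReflTransGen (Adj E) e.2 e.1 := by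
  simp [extensions, mem_roots]

lemma card_extensions (hE : IsRootedForest E) :
    #(extensions E) = Fintype.card I * (Fintype.card I - 1 - #E) := by
  classical
  have h := card_filter_add_card_filter_not (s := roots E ×ˢ univ)
    (fun p : I × I => ReflTransGen (Adj E) p.2 p.1)
  rw [card_filter_reflTransGen_roots hE, card_product, card_roots hE, card_univ] at h
  rw [extensions, Nat.sub_right_comm, Nat.mul_sub_one, mul_comm]
  convert (Nat.sub_eq_of_eq_add' h.symm).symm

lemma card_forests_succ (k : ℕ) :
    (k + 1) * #{F : ForestOn I | #F.1 = k + 1} =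
      Fintype.card I * (Fintype.card I - 1 - k) * #{F : ForestOn I | #F.1 = k} := by
  have hA : #(({F : ForestOn I | #F.1 = k + 1} : Finset _).sigma fun F => F.1) =
      (k + 1) * #{F : ForestOn I | #F.1 = k + 1} := by
    rw [card_sigma, sum_congr rfl fun F hF => (mem_filter.1 hF).2, sum_const, smul_eq_mul,
      mul_comm]
  have hB : #(({F : ForestOn I | #F.1 = k} : Finset _).sigma fun F => extensions F.1) =
      Fintype.card I * (Fintype.card I - 1 - k) * #{F : ForestOn I | #F.1 = k} := by
    rw [card_sigma, sum_congr rfl fun F hF => by rw [card_extensions F.2, (mem_filter.1 hF).2],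
      sum_const, smul_eq_mul, mul_comm]
  rw [← hA, ← hB]
  refine card_bij' (fun p _ => ⟨⟨p.1.1.erase p.2, p.1.2.mono (erase_subset _ _)⟩, p.2⟩)
    (fun p hp => ⟨⟨insert p.2 p.1.1, p.1.2.insert (mem_extensions.1 (mem_sigma.1 hp).2).1
      (mem_extensions.1 (mem_sigma.1 hp).2).2⟩, p.2⟩) ?_ ?_ ?_ ?_
  · rintro ⟨F, e⟩ hp
    obtain ⟨hF, he⟩ := mem_sigma.1 hp
    simp only [mem_sigma, mem_filter_univ] at hF ⊢
    exact ⟨by rw [card_erase_of_mem he, hF, Nat.add_sub_cancel],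
      mem_extensions.2 ⟨F.2.isRoot_erase he, F.2.not_reflTransGen_erase he⟩⟩
  · rintro ⟨F, e⟩ hp
    obtain ⟨hF, he⟩ := mem_sigma.1 hp
    simp only [mem_sigma, mem_filter_univ] at hF ⊢
    exact ⟨by rw [card_insert_of_notMem fun h => (mem_extensions.1 he).1 e.2 h, hF],
      mem_insert_self _ _⟩
  · rintro ⟨F, e⟩ hp
    exact Sigma.ext (Subtype.ext (insert_erase (mem_sigma.1 hp).2)) HEq.rfl
  · rintro ⟨F, e⟩ hp
    exact Sigma.ext (Subtype.ext (erase_insert fun h =>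
      (mem_extensions.1 (mem_sigma.1 hp).2).1 e.2 h)) HEq.rfl

lemma card_forests (k : ℕ) :
    #{F : ForestOn I | #F.1 = k} = (Fintype.card I - 1).choose k * Fintype.card I ^ k := by
  induction k with
  | zero =>
    have : ({F : ForestOn I | #F.1 = 0} : Finset _) = {emptyForest I} := by
      ext F
      simp [Subtype.ext_iff, emptyForest]
    rw [this, card_singleton, Nat.choose_zero_right, pow_zero, mul_one]
  | succ k ih =>
    refine Nat.eq_of_mul_eq_mul_left k.succ_pos ?_
    rw [card_forests_succ, ih, mul_left_comm, ← mul_assoc (k + 1), mul_comm (k + 1),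
      Nat.choose_succ_right_eq]
    ring

lemma sum_le_neg_one_pow_card (F : ForestOn I) :
    ∑ G with G ≤ F, (-1 : ℤ) ^ #G.1 = if emptyForest I = F then 1 else 0 := by
  have hF : emptyForest I = F ↔ F.1 = ∅ := by rw [eq_comm, Subtype.ext_iff]; rfl
  rw [if_congr hF rfl rfl, ← sum_powerset_neg_one_pow_card]
  exact sum_bij' (fun G _ => G.1) (fun S hS => ⟨S, F.2.mono (mem_powerset.1 hS)⟩)
    (fun G hG => mem_powerset.2 (mem_filter.1 hG).2)
    (fun S hS => mem_filter.2 ⟨mem_univ _, mem_powerset.1 hS⟩)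
    (fun _ _ => rfl) (fun _ _ => rfl) (fun _ _ => rfl)

lemma mobius_emptyForest (F : ForestOn I) :
    mobius (· ≤ ·) (emptyForest I) F = (-1) ^ #F.1 :=
  mobius_eq_of_sum_le sum_le_neg_one_pow_card F

end RootedForest

open Polynomial RootedForest

/-- For `n ≥ 1`, the characteristic polynomial of the poset of rooted forests on
`{1,…,n}` is `Σ_F μ(0̂,F)·s^{(n−1)−|E_F|} = (s−n)^{n−1}`. -/
theorem forest_charpoly (n : ℕ) (hn : 1 ≤ n) :
    ∑ F : ForestOn (Fin n),
        Polynomial.C (mobius (· ≤ · : ForestOn (Fin n) → ForestOn (Fin n) → Prop)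
            (emptyForest (Fin n)) F) *
          (Polynomial.X : Polynomial ℤ) ^ (n - 1 - F.1.card)
      = (Polynomial.X - Polynomial.C (n : ℤ)) ^ (n - 1) := by
  have : Nonempty (Fin n) := ⟨⟨0, hn⟩⟩
  have hcard (F : ForestOn (Fin n)) : #F.1 ∈ range n := by
    simpa using card_edges_lt F.2
  calc _ = ∑ F : ForestOn (Fin n), (-1 : ℤ[X]) ^ #F.1 * X ^ (n - 1 - #F.1) := by
        simp [mobius_emptyForest]
    _ = ∑ k ∈ range n,
          #{F : ForestOn (Fin n) | #F.1 = k} • ((-1 : ℤ[X]) ^ k * X ^ (n - 1 - k)) := by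
        rw [← sum_fiberwise_of_maps_to fun F _ => hcard F]
        refine sum_congr rfl fun k _ => ?_
        rw [sum_congr rfl fun F hF => by rw [(mem_filter.1 hF).2], sum_const]
    _ = ∑ k ∈ range n, (-C (n : ℤ)) ^ k * X ^ (n - 1 - k) * ((n - 1).choose k : ℤ[X]) := by
        refine sum_congr rfl fun k _ => ?_
        rw [card_forests, Fintype.card_fin, nsmul_eq_mul, map_natCast, neg_pow (n : ℤ[X])]
        push_cast
        ring
    _ = (X - C (n : ℤ)) ^ (n - 1) := by
        rw [sub_eq_neg_add, add_pow, Nat.sub_add_cancel hn]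
end
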